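/- arXiv:math/0202298 — 2 statements merged into one kernel-verified Lean document; each statement's English description precedes it below -/
import Mathlib

section
/- For any real h > 0, real b ≥ 0, and real θ, the imaginary part of e^{(y+iθ)b}·Erfc((y+iθ)/√(2h) + (b/2)√(2h)), as a function of y > 0, decays to 0 of square-exponential order; more precisely there exist constants C, c > 0 such that |e^{(y+iθ)b}·Erfc((y+iθ)/√(2h) + (b/2)√(2h))| ≤ C·exp(-c y²) for all y ≥ 1. -/
/-!
For `Re w ≥ 0`, integrating the series termwise and applying Fubini to `∂ₓ exp(-(u + x w)²)`
gives `Erfc w = (2/√π) ∫₀^∞ exp(-(u + w)²) du`. As `|exp(-(u + w)²)| ≤ exp((Im w)² - (Re w)²) e^{-u²}`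
for `u ≥ 0`, this yields `|Erfc w| ≤ exp((Im w)² - (Re w)²)`. At `w = (y + iθ)/√(2h) + (b/2)√(2h)`
one has `(Re w)² = y²/(2h) + yb + b²h/2` and `Im w = θ/√(2h)`, so the factor `e^{yb}` cancels and
`e^{θ²/(2h)} e^{-y²/(2h)}` remains.
-/

open Real

/-- The complementary error function, extended to the complex plane as the entire function
`Erfc(z) = 1 - (2/√π) Σ_{n≥0} (-1)^n z^{2n+1}/(n!(2n+1))`. -/
noncomputable def erfc (z : ℂ) : ℂ :=
  1 - (2 / Real.sqrt π : ℂ) *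
    ∑' n : ℕ, (-1 : ℂ) ^ n * z ^ (2 * n + 1) / ((n.factorial : ℂ) * (2 * n + 1))

open MeasureTheory Set Filter Topology Complex

lemma norm_cexp_neg_sq (z : ℂ) : ‖cexp (-z ^ 2)‖ = rexp (z.im ^ 2 - z.re ^ 2) := by
  simp [Complex.norm_exp, pow_two, Complex.mul_re]

lemma norm_cexp_neg_sq_add_le {u : ℝ} (hu : 0 ≤ u) {v : ℂ} (hv : 0 ≤ v.re) :
    ‖cexp (-(u + v) ^ 2)‖ ≤ rexp (v.im ^ 2 - v.re ^ 2) * rexp (-u ^ 2) := by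
  rw [norm_cexp_neg_sq, ← Real.exp_add]
  gcongr
  simp only [add_re, ofReal_re, add_im, ofReal_im, zero_add]
  nlinarith [mul_nonneg hu hv]

lemma norm_mul_cexp_neg_sq_add_le {u : ℝ} (hu : 0 ≤ u) {v : ℂ} (hv : 0 ≤ v.re) :
    ‖(u + v) * cexp (-(u + v) ^ 2)‖ ≤ rexp (v.im ^ 2) * ((u + ‖v‖) * rexp (-u ^ 2)) := by
  have hnorm : ‖(u : ℂ) + v‖ ≤ u + ‖v‖ := by
    simpa [Complex.norm_real, abs_of_nonneg hu] using norm_add_le (u : ℂ) v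
  have hexp : rexp (v.im ^ 2 - v.re ^ 2) ≤ rexp (v.im ^ 2) := by gcongr; nlinarith
  calc ‖(u + v) * cexp (-(u + v) ^ 2)‖
      ≤ (u + ‖v‖) * (rexp (v.im ^ 2) * rexp (-u ^ 2)) := by
        rw [norm_mul]
        gcongr
        exact (norm_cexp_neg_sq_add_le hu hv).trans (by gcongr)
    _ = rexp (v.im ^ 2) * ((u + ‖v‖) * rexp (-u ^ 2)) := by ring

lemma integrable_exp_neg_sq : Integrable fun u : ℝ ↦ rexp (-u ^ 2) := by
  simpa using integrable_exp_neg_mul_sq (b := 1) one_pos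

lemma integrable_add_mul_exp_neg_sq (c : ℝ) :
    Integrable fun u : ℝ ↦ (u + c) * rexp (-u ^ 2) := by
  have h := integrable_mul_exp_neg_mul_sq (b := 1) one_pos
  simp only [neg_mul, one_mul] at h
  simp_rw [add_mul]
  exact h.add (integrable_exp_neg_sq.const_mul c)

lemma integrableOn_cexp_neg_sq_add (v : ℂ) (hv : 0 ≤ v.re) :
    IntegrableOn (fun u : ℝ ↦ cexp (-(u + v) ^ 2)) (Ioi 0) := by
  refine ((integrable_exp_neg_sq.const_mul (rexp (v.im ^ 2 - v.re ^ 2))).integrableOn).mono'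
    (by fun_prop) ?_
  filter_upwards [ae_restrict_mem measurableSet_Ioi] with u hu
  exact norm_cexp_neg_sq_add_le (le_of_lt hu) hv

lemma integrableOn_mul_cexp_neg_sq_add (v : ℂ) (hv : 0 ≤ v.re) :
    IntegrableOn (fun u : ℝ ↦ (u + v) * cexp (-(u + v) ^ 2)) (Ioi 0) := by
  refine (((integrable_add_mul_exp_neg_sq ‖v‖).const_mul (rexp (v.im ^ 2))).integrableOn).mono'
    (by fun_prop) ?_
  filter_upwards [ae_restrict_mem measurableSet_Ioi] with u hu
  exact norm_mul_cexp_neg_sq_add_le (le_of_lt hu) hv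

lemma tendsto_cexp_neg_sq_add_atTop (v : ℂ) (hv : 0 ≤ v.re) :
    Tendsto (fun u : ℝ ↦ cexp (-(u + v) ^ 2)) atTop (𝓝 0) := by
  have hgauss : Tendsto (fun u : ℝ ↦ rexp (v.im ^ 2 - v.re ^ 2) * rexp (-u ^ 2)) atTop (𝓝 0) := by
    simpa using (tendsto_exp_atBot.comp
      (tendsto_neg_atTop_atBot.comp (tendsto_pow_atTop two_ne_zero))).const_mul _
  refine squeeze_zero_norm' ?_ hgauss
  filter_upwards [eventually_ge_atTop 0] with u hu
  exact norm_cexp_neg_sq_add_le hu hv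

lemma integral_Ioi_mul_cexp_neg_sq_add (v : ℂ) (hv : 0 ≤ v.re) :
    ∫ u in Ioi (0 : ℝ), (u + v) * cexp (-(u + v) ^ 2) = cexp (-v ^ 2) / 2 := by
  have hderiv (u : ℝ) : HasDerivAt (fun u : ℝ ↦ -cexp (-(u + v) ^ 2) / 2)
      ((u + v) * cexp (-(u + v) ^ 2)) u := by
    have := ((((hasDerivAt_id' (u : ℂ)).add_const v).fun_pow 2).fun_neg.cexp.fun_neg.div_const 2)
    convert this.comp_ofReal using 1
    push_cast
    ring
  rw [integral_Ioi_of_hasDerivAt_of_tendsto' (fun u _ ↦ hderiv u)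
    (integrableOn_mul_cexp_neg_sq_add v hv)
    (by simpa using ((tendsto_cexp_neg_sq_add_atTop v hv).neg.div_const 2))]
  simp [neg_div]

lemma cexp_neg_sq_add_sub_eq_integral (u : ℝ) (w : ℂ) :
    cexp (-(u + w) ^ 2) - cexp (-u ^ 2) =
      ∫ x in (0 : ℝ)..1, -2 * w * ((u + x * w) * cexp (-(u + x * w) ^ 2)) := by
  have hderiv (x : ℝ) : HasDerivAt (fun x : ℝ ↦ cexp (-(u + x * w) ^ 2))
      (-2 * w * ((u + x * w) * cexp (-(u + x * w) ^ 2))) x := by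
    have := ((((hasDerivAt_id' (x : ℂ)).mul_const w).const_add (u : ℂ)).fun_pow 2).fun_neg.cexp
    convert this.comp_ofReal using 1
    push_cast
    ring
  rw [intervalIntegral.integral_eq_sub_of_hasDerivAt (fun x _ ↦ hderiv x)
    ((by fun_prop : Continuous _).intervalIntegrable _ _)]
  simp

-- With `g u x = exp (-(u + x w)²)` one has `∂ₓ g = w ∂ᵤ g`; integrating `∂ₓ g` first in `x` gives
-- the left side, first in `u` the right side.
lemma integral_Ioi_cexp_neg_sq_add_sub (w : ℂ) (hw : 0 ≤ w.re) :
    ∫ u in Ioi (0 : ℝ), (cexp (-(u + w) ^ 2) - cexp (-u ^ 2)) =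
      -∫ x in (0 : ℝ)..1, w * cexp (-(x * w) ^ 2) := by
  have hxw {x : ℝ} (hx : x ∈ Ioc (0 : ℝ) 1) : 0 ≤ (x * w).re := by
    simpa using mul_nonneg hx.1.le hw
  have hint : Integrable (Function.uncurry fun (u x : ℝ) ↦
      -2 * w * ((u + x * w) * cexp (-(u + x * w) ^ 2)))
      ((volume.restrict (Ioi 0)).prod (volume.restrict (Ioc 0 1))) := by
    have hdom := (((integrable_add_mul_exp_neg_sq ‖w‖).const_mul
      (2 * ‖w‖ * rexp (w.im ^ 2))).restrict (s := Ioi 0)).mul_prod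
      (integrable_const (μ := volume.restrict (Ioc (0 : ℝ) 1)) (1 : ℝ))
    refine hdom.mono' (by fun_prop) ?_
    rw [Measure.prod_restrict]
    filter_upwards [ae_restrict_mem (measurableSet_Ioi.prod measurableSet_Ioc)]
      with ⟨u, x⟩ ⟨hu, hx⟩
    have hu : 0 ≤ u := le_of_lt hu
    have him : (x * w).im ^ 2 ≤ w.im ^ 2 := by
      simpa [mul_pow] using mul_le_of_le_one_left (sq_nonneg w.im) (pow_le_one₀ hx.1.le hx.2)
    have hnorm : ‖(x : ℂ) * w‖ ≤ ‖w‖ := by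
      simpa [abs_of_pos hx.1] using mul_le_of_le_one_left (norm_nonneg w) hx.2
    calc ‖-2 * w * ((u + x * w) * cexp (-(u + x * w) ^ 2))‖
        ≤ 2 * ‖w‖ * (rexp ((x * w).im ^ 2) * ((u + ‖(x : ℂ) * w‖) * rexp (-u ^ 2))) := by
          rw [norm_mul, norm_mul]
          simp only [norm_neg, Complex.norm_ofNat]
          gcongr
          exact norm_mul_cexp_neg_sq_add_le hu (hxw hx)
      _ ≤ 2 * ‖w‖ * (rexp (w.im ^ 2) * ((u + ‖w‖) * rexp (-u ^ 2))) := by gcongr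
      _ = _ := by ring
  calc ∫ u in Ioi (0 : ℝ), (cexp (-(u + w) ^ 2) - cexp (-u ^ 2))
      = ∫ u in Ioi (0 : ℝ), ∫ x in Ioc (0 : ℝ) 1,
          -2 * w * ((u + x * w) * cexp (-(u + x * w) ^ 2)) := by
        simp_rw [cexp_neg_sq_add_sub_eq_integral, intervalIntegral.integral_of_le zero_le_one]
    _ = ∫ x in Ioc (0 : ℝ) 1, ∫ u in Ioi (0 : ℝ),
          -2 * w * ((u + x * w) * cexp (-(u + x * w) ^ 2)) := integral_integral_swap hint
    _ = ∫ x in Ioc (0 : ℝ) 1, -(w * cexp (-(x * w) ^ 2)) := by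
        refine setIntegral_congr_fun measurableSet_Ioc fun x hx ↦ ?_
        rw [integral_const_mul, integral_Ioi_mul_cexp_neg_sq_add _ (hxw hx)]
        ring
    _ = -∫ x in (0 : ℝ)..1, w * cexp (-(x * w) ^ 2) := by
        rw [integral_neg, intervalIntegral.integral_of_le zero_le_one]

lemma hasSum_mul_cexp_neg_sq_mul (w : ℂ) (x : ℝ) :
    HasSum (fun n : ℕ ↦ (-1) ^ n * w ^ (2 * n + 1) / n.factorial * (x : ℂ) ^ (2 * n))
      (w * cexp (-(x * w) ^ 2)) := by
  have h := (NormedSpace.expSeries_div_hasSum_exp (-(x * w) ^ 2)).mul_left w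
  rw [← Complex.exp_eq_exp_ℂ] at h
  convert h using 1
  · rfl
  · funext n
    rw [neg_pow ((x * w : ℂ) ^ 2), ← pow_mul, mul_pow]
    ring

lemma tsum_erfc_series_eq_integral (w : ℂ) :
    ∑' n : ℕ, (-1 : ℂ) ^ n * w ^ (2 * n + 1) / ((n.factorial : ℂ) * (2 * n + 1)) =
      ∫ x in (0 : ℝ)..1, w * cexp (-(x * w) ^ 2) := by
  have hsum := intervalIntegral.hasSum_integral_of_dominated_convergence
    (μ := volume) (a := 0) (b := 1) (fun n _ ↦ ‖w‖ ^ (2 * n + 1) / n.factorial)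
    (fun n ↦ by fun_prop) (fun n ↦ ?_) ?_
    intervalIntegrable_const (ae_of_all _ fun x _ ↦ hasSum_mul_cexp_neg_sq_mul w x)
  · rw [← hsum.tsum_eq]
    congr 1 with n
    have hint : ∫ x in (0 : ℝ)..1, (x : ℂ) ^ (2 * n) = 1 / (2 * n + 1) := by
      simp_rw [← Complex.ofReal_pow, intervalIntegral.integral_ofReal, integral_pow]
      push_cast
      ring
    rw [intervalIntegral.integral_const_mul, hint]
    field_simp
  · filter_upwards with x hx
    rw [uIoc_of_le zero_le_one] at hx
    have hx1 : ‖(x : ℂ) ^ (2 * n)‖ ≤ 1 := by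
      simpa [abs_of_pos hx.1] using pow_le_one₀ hx.1.le hx.2
    simpa using mul_le_of_le_one_right (by positivity) hx1
  · refine ae_of_all _ fun x _ ↦ ?_
    exact ((Real.summable_pow_div_factorial (‖w‖ ^ 2)).mul_left ‖w‖).congr fun n ↦ by ring

lemma integral_Ioi_exp_neg_sq : ∫ u in Ioi (0 : ℝ), rexp (-u ^ 2) = √π / 2 := by
  simpa using integral_gaussian_Ioi 1

lemma integral_Ioi_cexp_neg_sq : ∫ u in Ioi (0 : ℝ), cexp (-(u : ℂ) ^ 2) = √π / 2 := by
  have h := congrArg ((↑) : ℝ → ℂ) integral_Ioi_exp_neg_sq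
  rw [← integral_complex_ofReal] at h
  simpa using h

lemma erfc_eq_two_div_sqrt_pi_mul_integral (w : ℂ) (hw : 0 ≤ w.re) :
    erfc w = 2 / √π * ∫ u in Ioi (0 : ℝ), cexp (-(u + w) ^ 2) := by
  have hsplit := integral_Ioi_cexp_neg_sq_add_sub w hw
  rw [integral_sub (integrableOn_cexp_neg_sq_add w hw)
    (by simpa using (integrableOn_cexp_neg_sq_add 0 le_rfl).integrable), integral_Ioi_cexp_neg_sq,
    ← tsum_erfc_series_eq_integral] at hsplit
  have hpi : (√π : ℂ) ≠ 0 := ofReal_ne_zero.mpr (Real.sqrt_pos.mpr pi_pos).ne'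
  rw [erfc, eq_add_of_sub_eq hsplit]
  field_simp
  ring

lemma norm_erfc_le (w : ℂ) (hw : 0 ≤ w.re) : ‖erfc w‖ ≤ rexp (w.im ^ 2 - w.re ^ 2) := by
  have hpi : 0 < √π := Real.sqrt_pos.mpr pi_pos
  calc ‖erfc w‖ = 2 / √π * ‖∫ u in Ioi (0 : ℝ), cexp (-(u + w) ^ 2)‖ := by
        rw [erfc_eq_two_div_sqrt_pi_mul_integral w hw, norm_mul, norm_div, norm_real,
          Real.norm_of_nonneg hpi.le, Complex.norm_ofNat]
    _ ≤ 2 / √π * ∫ u in Ioi (0 : ℝ), rexp (w.im ^ 2 - w.re ^ 2) * rexp (-u ^ 2) := by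
        gcongr
        refine norm_integral_le_of_norm_le ((integrable_exp_neg_sq.const_mul _).integrableOn) ?_
        filter_upwards [ae_restrict_mem measurableSet_Ioi] with u hu
        exact norm_cexp_neg_sq_add_le (le_of_lt hu) hw
    _ = rexp (w.im ^ 2 - w.re ^ 2) := by
        rw [integral_const_mul, integral_Ioi_exp_neg_sq]
        field_simp

/-- For real `h > 0`, `b ≥ 0` and real `θ`, the function
`y ↦ e^{(y+iθ)b} Erfc((y+iθ)/√(2h) + (b/2)√(2h))` decays to `0` of square-exponential
order: there are `C, c > 0` with
`|e^{(y+iθ)b} Erfc((y+iθ)/√(2h) + (b/2)√(2h))| ≤ C exp(-c y²)` for all `y ≥ 1`. -/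
theorem weighted_erfc_square_exponential_decay (h b θ : ℝ) (hh : 0 < h) (hb : 0 ≤ b) :
    ∃ C c : ℝ, 0 < C ∧ 0 < c ∧ ∀ y : ℝ, 1 ≤ y →
      ‖Complex.exp (((y : ℂ) + Complex.I * θ) * b) *
          erfc (((y : ℂ) + Complex.I * θ) / Real.sqrt (2 * h) +
            (b / 2) * Real.sqrt (2 * h))‖ ≤ C * Real.exp (-c * y ^ 2) := by
  set s := √(2 * h)
  have hs_pos : 0 < s := Real.sqrt_pos.mpr (by positivity)
  have hs_sq : s ^ 2 = 2 * h := Real.sq_sqrt (by positivity)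
  refine ⟨rexp (θ ^ 2 / (2 * h)), 1 / (2 * h), by positivity, by positivity, fun y hy ↦ ?_⟩
  set w : ℂ := ((y : ℂ) + I * θ) / s + (b / 2) * s
  have hw_re : w.re = y / s + b / 2 * s := by simp [w]
  have hw_im : w.im = θ / s := by simp [w]
  have hw : 0 ≤ w.re := by rw [hw_re]; positivity
  calc ‖cexp ((y + I * θ) * b) * erfc w‖
      ≤ rexp (y * b) * rexp (w.im ^ 2 - w.re ^ 2) := by
        rw [norm_mul, Complex.norm_exp]
        gcongr
        · simp
        · exact norm_erfc_le w hw
    _ ≤ rexp (θ ^ 2 / (2 * h)) * rexp (-(1 / (2 * h)) * y ^ 2) := by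
        rw [← Real.exp_add, ← Real.exp_add, hw_re, hw_im, Real.exp_le_exp]
        have : (y / s + b / 2 * s) ^ 2 = y ^ 2 / (2 * h) + y * b + b ^ 2 * s ^ 2 / 4 := by
          field_simp
          rw [hs_sq]
          ring
        have hneg : -(1 / (2 * h)) * y ^ 2 = -(y ^ 2 / (2 * h)) := by ring
        rw [this, div_pow, hs_sq, hneg]
        linarith [show 0 ≤ b ^ 2 * (2 * h) / 4 by positivity]
end

section
/- For any complex μ that is not a nonnegative integer and any complex z, the Hermite function has the absolutely convergent series H_μ(z) = (1/(2Γ(-μ)))·Σ_{n=0}^∞ ((-1)^n/n!)·Γ((n-μ)/2)·(2z)^n, and when Re(μ) < 0 this series equals (1/Γ(-μ)) ∫₀^∞ e^{-u²-2zu} u^{-(μ+1)} du. -/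
/-!
Expand `e^{-2zu}` in its exponential series. Substituting `u = √t` in Euler's integral, the `n`-th
term integrated against `e^{-u²} u^{-μ-1}` gives `((-2z)^n / n!) Γ((n - μ)/2) / 2`, so the integral
is half the series once summation and integration may be swapped. This is legitimate because the
integrals of the absolute values are again terms of the series, now for `(Re μ, -|z|)`.
Absolute convergence of the series comes from `Γ(s + 1) = s Γ(s)`: terms two apart have ratio
`(n - μ)(2z)² / (2(n + 1)(n + 2)) → 0`.
-/

open MeasureTheory Real Set Filter

lemma summable_norm_of_norm_add_two_le {E : Type*} [SeminormedAddCommGroup E] {f : ℕ → E}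
    {r : ℝ} (hr : r < 1) (h : ∀ᶠ n in atTop, ‖f (n + 2)‖ ≤ r * ‖f n‖) :
    Summable fun n => ‖f n‖ := by
  obtain ⟨N, hN⟩ := eventually_atTop.1 h
  have hsub (e : ℕ) : Summable fun k => ‖f (2 * k + e)‖ := by
    refine summable_of_ratio_norm_eventually_le hr (eventually_atTop.2 ⟨N, fun k hk => ?_⟩)
    rw [norm_norm, norm_norm, show 2 * (k + 1) + e = 2 * k + e + 2 by ring]
    exact hN _ (by omega)
  exact (hsub 0).even_add_odd (hsub 1)

lemma norm_exp_neg_sq_mul_cpow {u : ℝ} (hu : 0 < u) (w : ℂ) :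
    ‖Complex.exp (-(u : ℂ) ^ 2) * (u : ℂ) ^ w‖ = u ^ w.re * Real.exp (-u ^ (2 : ℝ)) := by
  rw [norm_mul, Complex.norm_exp, Complex.norm_cpow_eq_rpow_re_of_pos hu, rpow_two, mul_comm]
  norm_cast

lemma integrableOn_exp_neg_sq_mul_cpow {w : ℂ} (hw : -1 < w.re) :
    IntegrableOn (fun u : ℝ => Complex.exp (-(u : ℂ) ^ 2) * (u : ℂ) ^ w) (Ioi 0) := by
  have hcont : ContinuousOn (fun u : ℝ => Complex.exp (-(u : ℂ) ^ 2) * (u : ℂ) ^ w) (Ioi 0) :=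
    fun u hu => (by fun_prop : Continuous fun u : ℝ => Complex.exp (-(u : ℂ) ^ 2)).continuousAt
      |>.mul ((continuousAt_cpow_const (Complex.ofReal_mem_slitPlane.2 hu)).comp
        Complex.continuous_ofReal.continuousAt) |>.continuousWithinAt
  refine (integrableOn_rpow_mul_exp_neg_rpow hw zero_lt_two).mono'
    (hcont.aestronglyMeasurable measurableSet_Ioi) ?_
  filter_upwards [ae_restrict_mem measurableSet_Ioi] with u hu
  exact (norm_exp_neg_sq_mul_cpow hu w).le

lemma integral_exp_neg_sq_mul_cpow {s : ℂ} (hs : 0 < s.re) :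
    ∫ u in Ioi (0 : ℝ), Complex.exp (-(u : ℂ) ^ 2) * (u : ℂ) ^ (s - 1) =
      Complex.Gamma (s / 2) / 2 := by
  have hs2 : 0 < (s / 2).re := by simpa using half_pos hs
  have hsubst := integral_comp_rpow_Ioi_of_pos (p := 2) zero_lt_two
    (g := fun t : ℝ => (Real.exp (-t) : ℂ) * (t : ℂ) ^ (s / 2 - 1))
  rw [← Complex.GammaIntegral, ← Complex.Gamma_eq_integral hs2] at hsubst
  rw [← hsubst, eq_div_iff two_ne_zero, ← integral_mul_const]
  refine setIntegral_congr_fun measurableSet_Ioi fun u (hu : 0 < u) => ?_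
  have hsq : (u : ℂ) ^ (s - 1) = u * (u : ℂ) ^ ((2 : ℝ) * (s / 2 - 1) : ℂ) :=
    calc (u : ℂ) ^ (s - 1) = (u : ℂ) ^ (1 + ((2 : ℝ) : ℂ) * (s / 2 - 1)) := by
          congr 1; push_cast; ring
      _ = _ := by rw [Complex.cpow_add _ _ (by exact_mod_cast hu.ne'), Complex.cpow_one]
  rw [hsq, Complex.cpow_mul_ofReal_nonneg hu.le, Complex.real_smul]
  push_cast
  norm_num
  ring

noncomputable def hermiteTerm (μ z : ℂ) (n : ℕ) : ℂ :=
  ((-1 : ℂ) ^ n / (n.factorial : ℂ)) * Complex.Gamma (((n : ℂ) - μ) / 2) * (2 * z) ^ n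

lemma hermiteTerm_add_two {μ : ℂ} (z : ℂ) {n : ℕ} (hμ : μ ≠ n) :
    hermiteTerm μ z (n + 2) =
      hermiteTerm μ z n * ((n - μ) / 2 * (2 * z) ^ 2 / ((n + 1) * (n + 2))) := by
  have hΓ : Complex.Gamma ((((n + 2 : ℕ) : ℂ) - μ) / 2) =
      (n - μ) / 2 * Complex.Gamma ((n - μ) / 2) := by
    rw [← Complex.Gamma_add_one _ (by simpa [sub_eq_zero] using hμ.symm)]
    congr 1; push_cast; ring
  have hfact : ((n + 2).factorial : ℂ) = (n + 1) * (n + 2) * n.factorial := by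
    push_cast [Nat.factorial_succ]; ring
  have h1 : (n + 1 : ℂ) ≠ 0 := by exact_mod_cast n.succ_ne_zero
  have h2 : (n + 2 : ℂ) ≠ 0 := by exact_mod_cast (n + 1).succ_ne_zero
  rw [hermiteTerm, hermiteTerm, hΓ, hfact]
  field_simp
  ring

lemma norm_hermiteTerm_add_two_le {μ z : ℂ} {n : ℕ} (hμ : μ ≠ n) (hμn : ‖μ‖ ≤ n)
    (hzn : 2 * ‖2 * z‖ ^ 2 ≤ n) :
    ‖hermiteTerm μ z (n + 2)‖ ≤ 1 / 2 * ‖hermiteTerm μ z n‖ := by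
  have hnum : ‖((n : ℂ) - μ) / 2‖ ≤ n + 1 := by
    rw [norm_div, Complex.norm_two, div_le_iff₀ two_pos]
    calc ‖(n : ℂ) - μ‖ ≤ n + ‖μ‖ := by simpa using norm_sub_le (n : ℂ) μ
      _ ≤ (n + 1) * 2 := by linarith
  have hden : ‖((n : ℂ) + 1) * (n + 2)‖ = (n + 1) * (n + 2) := by
    rw [norm_mul]; norm_cast
  have hratio : ‖((n : ℂ) - μ) / 2 * (2 * z) ^ 2 / ((n + 1) * (n + 2))‖ ≤ 1 / 2 := by
    rw [norm_div, norm_mul, norm_pow, hden, div_le_iff₀ (by positivity)]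
    calc ‖((n : ℂ) - μ) / 2‖ * ‖2 * z‖ ^ 2 ≤ (n + 1) * ((n + 2) / 2) := by
          gcongr
          linarith
      _ = 1 / 2 * ((n + 1) * (n + 2)) := by ring
  rw [hermiteTerm_add_two z hμ, norm_mul, mul_comm (1 / 2)]
  exact mul_le_mul_of_nonneg_left hratio (norm_nonneg _)

lemma summable_norm_hermiteTerm {μ : ℂ} (hμ : ∀ k : ℕ, μ ≠ k) (z : ℂ) :
    Summable fun n => ‖hermiteTerm μ z n‖ := by
  refine summable_norm_of_norm_add_two_le one_half_lt_one ?_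
  filter_upwards [eventually_ge_atTop ⌈max ‖μ‖ (2 * ‖2 * z‖ ^ 2)⌉₊] with n hn
  have hn' := Nat.ceil_le.1 hn
  exact norm_hermiteTerm_add_two_le (hμ n) (le_of_max_le_left hn') (le_of_max_le_right hn')

noncomputable def hermiteSummand (μ z : ℂ) (n : ℕ) (u : ℝ) : ℂ :=
  (-(2 * z) * u) ^ n / n.factorial * (Complex.exp (-(u : ℂ) ^ 2) * (u : ℂ) ^ (-(μ + 1)))

lemma hasSum_hermiteSummand (μ z : ℂ) (u : ℝ) :
    HasSum (fun n => hermiteSummand μ z n u)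
      (Complex.exp (-(u : ℂ) ^ 2 - 2 * z * u) * (u : ℂ) ^ (-(μ + 1))) := by
  have hexp := NormedSpace.expSeries_div_hasSum_exp (-(2 * z) * u)
  rw [← Complex.exp_eq_exp_ℂ] at hexp
  rw [sub_eq_neg_add, Complex.exp_add, neg_mul_eq_neg_mul, mul_assoc]
  exact hexp.mul_right _

lemma hermiteSummand_eq {u : ℝ} (hu : 0 < u) (μ z : ℂ) (n : ℕ) :
    hermiteSummand μ z n u =
      (-(2 * z)) ^ n / n.factorial * (Complex.exp (-(u : ℂ) ^ 2) * (u : ℂ) ^ (n - μ - 1)) := by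
  have hpow : (u : ℂ) ^ n * (u : ℂ) ^ (-(μ + 1)) = (u : ℂ) ^ (n - μ - 1) := by
    rw [← Complex.cpow_natCast, ← Complex.cpow_add _ _ (by exact_mod_cast hu.ne')]
    ring_nf
  rw [hermiteSummand, mul_pow, ← hpow]
  ring

lemma integrableOn_hermiteSummand {μ : ℂ} (z : ℂ) {n : ℕ} (hμ : μ.re < n) :
    IntegrableOn (hermiteSummand μ z n) (Ioi 0) := by
  refine IntegrableOn.congr_fun (Integrable.const_mul (integrableOn_exp_neg_sq_mul_cpow ?_) _)
    (fun u hu => (hermiteSummand_eq hu μ z n).symm) measurableSet_Ioi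
  simpa using hμ

lemma integral_hermiteSummand {μ : ℂ} (z : ℂ) {n : ℕ} (hμ : μ.re < n) :
    ∫ u in Ioi 0, hermiteSummand μ z n u = hermiteTerm μ z n / 2 := by
  rw [setIntegral_congr_fun measurableSet_Ioi fun u hu => hermiteSummand_eq hu μ z n,
    integral_const_mul, integral_exp_neg_sq_mul_cpow (by simpa using hμ), hermiteTerm, neg_pow]
  ring

lemma ofReal_norm_hermiteSummand {u : ℝ} (hu : 0 < u) (μ z : ℂ) (n : ℕ) :
    (‖hermiteSummand μ z n u‖ : ℂ) = hermiteSummand μ.re (-‖z‖) n u := by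
  have hu' : (u : ℂ) ^ (n - (μ.re : ℂ) - 1) = ((u ^ (n - μ.re - 1) : ℝ) : ℂ) := by
    rw [Complex.ofReal_cpow hu.le]; push_cast; rfl
  rw [hermiteSummand_eq hu, hermiteSummand_eq hu, norm_mul, norm_exp_neg_sq_mul_cpow hu, hu']
  push_cast
  simp [norm_pow, mul_comm]

lemma integral_norm_hermiteSummand {μ : ℂ} (z : ℂ) {n : ℕ} (hμ : μ.re < n) :
    ∫ u in Ioi 0, ‖hermiteSummand μ z n u‖ = (hermiteTerm μ.re (-‖z‖) n).re / 2 := by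
  have h := integral_hermiteSummand (μ := μ.re) (-‖z‖) (by simpa using hμ)
  rw [← setIntegral_congr_fun measurableSet_Ioi fun u hu => ofReal_norm_hermiteSummand hu μ z n,
    integral_complex_ofReal] at h
  rw [← Complex.ofReal_re (∫ u in Ioi 0, _), h, Complex.div_ofNat_re]

lemma integral_exp_neg_sq_sub_mul_cpow {μ : ℂ} (hμ : μ.re < 0) (z : ℂ) :
    ∫ u in Ioi (0 : ℝ), Complex.exp (-(u : ℂ) ^ 2 - 2 * z * u) * (u : ℂ) ^ (-(μ + 1)) =
      (∑' n, hermiteTerm μ z n) / 2 := by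
  have hμn (n : ℕ) : μ.re < n := hμ.trans_le n.cast_nonneg
  have hμre (k : ℕ) : (μ.re : ℂ) ≠ k := fun h => (hμn k).ne (by exact_mod_cast h)
  have hsum : Summable fun n => ∫ u in Ioi 0, ‖hermiteSummand μ z n u‖ := by
    simp only [integral_norm_hermiteSummand z (hμn _)]
    exact (Complex.hasSum_re (summable_norm_hermiteTerm hμre _).of_norm.hasSum).summable.div_const 2
  simp only [← (hasSum_hermiteSummand μ z _).tsum_eq]
  rw [← integral_tsum_of_summable_integral_norm
    (fun n => integrableOn_hermiteSummand z (hμn n)) hsum]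
  simp only [integral_hermiteSummand z (hμn _), tsum_div_const]

/-- For any complex `μ` that is not a nonnegative integer and any complex `z`, the series
`(1/(2Γ(-μ))) Σ_{n≥0} ((-1)^n/n!) Γ((n-μ)/2) (2z)^n` converges absolutely, and when
`Re μ < 0` it equals the Hermite function
`H_μ(z) = (1/Γ(-μ)) ∫₀^∞ e^{-u²-2zu} u^{-(μ+1)} du`. -/
theorem hermiteH_series (μ : ℂ) (hμ : ∀ k : ℕ, μ ≠ (k : ℂ)) (z : ℂ) :
    Summable (fun n : ℕ =>
      ‖((-1 : ℂ) ^ n / (n.factorial : ℂ)) * Complex.Gamma (((n : ℂ) - μ) / 2) * (2 * z) ^ n‖) ∧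
    (μ.re < 0 →
      (1 / (2 * Complex.Gamma (-μ))) *
          ∑' n : ℕ, ((-1 : ℂ) ^ n / (n.factorial : ℂ)) *
            Complex.Gamma (((n : ℂ) - μ) / 2) * (2 * z) ^ n =
        (Complex.Gamma (-μ))⁻¹ *
          ∫ u in Set.Ioi (0 : ℝ),
            Complex.exp (-(u : ℂ) ^ 2 - 2 * z * u) * (u : ℂ) ^ (-(μ + 1))) := by
  refine ⟨summable_norm_hermiteTerm hμ z, fun hμre => ?_⟩
  have hΓ : Complex.Gamma (-μ) ≠ 0 := Complex.Gamma_ne_zero fun m h => hμ m (neg_inj.mp h)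
  rw [integral_exp_neg_sq_sub_mul_cpow hμre z]
  unfold hermiteTerm
  field_simp
end
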